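/- arXiv:1507.06865 — 4 statements merged into one kernel-verified Lean document; each statement's English description precedes it below -/
import Mathlib

section
/- Let G be an undirected graph with nonnegative edge weights and suppose p is a walk of the form s, x, i, j, y, i, j, z (i.e., p traverses the edge (i,j) in the direction from i to j at least twice, with y the segment between the two traversals). Then p' = s, x, i, y^R, j, z, where y^R denotes the reversal of y, is a walk in G that visits exactly the same set of vertices as p and whose total weight equals the total weight of p minus 2·w(i,j). -/
open SimpleGraph

/-- The total weight of a walk: sum of edge weights with multiplicity. -/
def walkWeight {V : Type*} {G : SimpleGraph V} (w : V → V → ℝ) {u v : V}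
    (p : G.Walk u v) : ℝ :=
  (p.darts.map (fun d => w d.fst d.snd)).sum

lemma walkWeight_append {V : Type*} {G : SimpleGraph V} (w : V → V → ℝ) {u v t : V}
    (p : G.Walk u v) (q : G.Walk v t) :
    walkWeight w (p.append q) = walkWeight w p + walkWeight w q := by
  simp [walkWeight, Walk.darts_append]

lemma walkWeight_reverse {V : Type*} {G : SimpleGraph V} (w : V → V → ℝ)
    (hw : ∀ a b, w a b = w b a) {u v : V} (p : G.Walk u v) :
    walkWeight w p.reverse = walkWeight w p := by
  simp only [walkWeight, Walk.darts_reverse, List.map_reverse, List.sum_reverse,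
    List.map_map]
  congr 1
  apply List.map_congr_left
  intro d _
  exact (hw _ _).symm

theorem stmt3 {V : Type*} {G : SimpleGraph V} (w : V → V → ℝ)
    (hw : ∀ a b, w a b = w b a) (hnn : ∀ a b, G.Adj a b → 0 ≤ w a b)
    {s i j z : V} (hij : G.Adj i j)
    (x : G.Walk s i) (y : G.Walk j i) (zw : G.Walk j z) :
    ∀ p : G.Walk s z, p = x.append (Walk.cons hij (y.append (Walk.cons hij zw))) →
    ∀ p' : G.Walk s z, p' = x.append (y.reverse.append zw) →
      {v | v ∈ p'.support} = {v | v ∈ p.support} ∧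
      walkWeight w p' = walkWeight w p - 2 * w i j := by
  intro p hp p' hp'
  subst hp hp'
  constructor
  · ext v
    have hi : i ∈ x.support := Walk.end_mem_support x
    have hj : j ∈ y.support := Walk.start_mem_support y
    simp only [Set.mem_setOf_eq, Walk.mem_support_append_iff, Walk.support_cons,
      List.mem_cons, Walk.support_reverse, List.mem_reverse]
    constructor
    · rintro (h | h | h) <;> tauto
    · rintro (h | rfl | h | rfl | h) <;> tauto
  · have hcons : ∀ (a b : V) (h : G.Adj a b) (q : G.Walk b z),
        walkWeight w (Walk.cons h q) = w a b + walkWeight w q := by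
      intro a b h q; simp [walkWeight]
    rw [walkWeight_append, walkWeight_append, walkWeight_reverse w hw,
      walkWeight_append, hcons, walkWeight_append, hcons]
    ring
end

section
/- Let G be an undirected graph with positive edge weights and a vertex coloring κ, with at least two colors present. Let OPT_T be the minimum weight of a subtree of G containing all colors and, for each vertex j, let OPT_ACSP(j) be the minimum weight of a walk from j visiting all colors (all optima attained). Then min over j ∈ V of OPT_ACSP(j) < 2 · OPT_T. -/
open SimpleGraph

lemma walkWeight_cons {V : Type*} {G : SimpleGraph V} (w : V → V → ℝ) {u v t : V}
    (h : G.Adj u v) (p : G.Walk v t) :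
    walkWeight w (Walk.cons h p) = w u v + walkWeight w p := by simp [walkWeight]

-- every vertex on a walk is reachable from the start
lemma reach_of_mem_support {V : Type*} {G : SimpleGraph V} {u v t : V}
    (p : G.Walk u v) (h : t ∈ p.support) : G.Reachable u t := by
  classical
  exact ⟨p.takeUntil t h⟩

-- Lemma A: deleting edge s(r,u) from F, everything F-reachable from r is
-- F'-reachable from r or from u.
lemma reach_erase {V : Type*} [DecidableEq (Sym2 V)] {F : Finset (Sym2 V)} {r u : V}
    (he : s(r,u) ∈ F) :
    ∀ {a x : V}, ((fromEdgeSet (↑(F.erase s(r,u)))).Reachable r a ∨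
      (fromEdgeSet (↑(F.erase s(r,u)))).Reachable u a) →
    (fromEdgeSet (↑F)).Walk a x →
    ((fromEdgeSet (↑(F.erase s(r,u)))).Reachable r x ∨
      (fromEdgeSet (↑(F.erase s(r,u)))).Reachable u x) := by
  intro a x ha p
  induction p with
  | nil => exact ha
  | cons h q ih =>
    rename_i c d e
    apply ih
    rw [fromEdgeSet_adj] at h
    by_cases hcd : s(c,d) = s(r,u)
    · have : d ∈ s(r,u) := by rw [← hcd]; exact Sym2.mem_mk_right c d
      rcases Sym2.mem_iff.mp this with h1 | h1
      · exact Or.inl (by rw [h1])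
      · exact Or.inr (by rw [h1])
    · have hadj : (fromEdgeSet (↑(F.erase s(r,u)))).Adj c d := by
        rw [fromEdgeSet_adj]
        exact ⟨by simp only [Finset.coe_erase, Set.mem_diff, Set.mem_singleton_iff]; exact ⟨h.1, hcd⟩, h.2⟩
      rcases ha with h1 | h1
      · exact Or.inl (h1.trans hadj.reachable)
      · exact Or.inr (h1.trans hadj.reachable)

lemma lift_pos {V : Type*} {G : SimpleGraph V} {w : V → V → ℝ} (hw : ∀ a b, w a b = w b a)
    (hpos : ∀ a b, G.Adj a b → 0 < w a b) :
    ∀ e ∈ G.edgeSet, 0 < Sym2.lift ⟨w, hw⟩ e := by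
  intro e he
  induction e with
  | _ a b => simpa using hpos a b (by simpa using he)

lemma tour {V : Type*} {G : SimpleGraph V} (w : V → V → ℝ) (hw : ∀ a b, w a b = w b a)
    (hpos : ∀ a b, G.Adj a b → 0 < w a b) :
    ∀ (n : ℕ) (F : Finset (Sym2 V)), F.card ≤ n → ↑F ⊆ G.edgeSet → ∀ r : V,
    ∃ p : G.Walk r r, (∀ x, (fromEdgeSet (↑F : Set (Sym2 V))).Reachable r x → x ∈ p.support) ∧
      walkWeight w p ≤ 2 * ∑ e ∈ F, Sym2.lift ⟨w, hw⟩ e := by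
  classical
  intro n
  induction n with
  | zero =>
    intro F hcard hsub r
    have hF : F = ∅ := Finset.card_eq_zero.mp (Nat.le_zero.mp hcard)
    subst hF
    refine ⟨Walk.nil, ?_, by simp [walkWeight]⟩
    intro x hx
    obtain ⟨q⟩ := hx
    cases q with
    | nil => simp
    | cons h q => simp at h
  | succ n ih =>
    intro F hcard hsub r
    by_cases hex : ∃ e ∈ F, r ∈ e
    · obtain ⟨e, heF, hre⟩ := hex
      obtain ⟨u, rfl⟩ := Sym2.mem_iff_exists.mp hre
      have hGadj : G.Adj r u := by simpa using hsub heF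
      set F' := F.erase s(r,u) with hF'
      have hcard' : F'.card ≤ n := by
        have h1 : F'.card = F.card - 1 := by rw [hF']; exact Finset.card_erase_of_mem heF
        have h2 : 0 < F.card := Finset.card_pos.mpr ⟨_, heF⟩
        omega
      have hsub' : (↑F' : Set (Sym2 V)) ⊆ G.edgeSet := fun e he =>
        hsub (Finset.mem_coe.mp (Finset.erase_subset _ _ (Finset.mem_coe.mpr he)))
      have hsum : ∑ e ∈ F', Sym2.lift ⟨w, hw⟩ e + w r u = ∑ e ∈ F, Sym2.lift ⟨w, hw⟩ e := by
        have := Finset.sum_erase_add F (Sym2.lift ⟨w, hw⟩) heF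
        simpa using this
      by_cases hru : (fromEdgeSet (↑F' : Set (Sym2 V))).Reachable r u
      · obtain ⟨p, hp1, hp2⟩ := ih F' hcard' hsub' r
        refine ⟨p, ?_, ?_⟩
        · intro x hx
          obtain ⟨q⟩ := hx
          rcases reach_erase heF (Or.inl (Reachable.refl r)) q with h1 | h1
          · exact hp1 x h1
          · exact hp1 x (hru.trans h1)
        · calc walkWeight w p ≤ 2 * ∑ e ∈ F', Sym2.lift ⟨w, hw⟩ e := hp2
            _ ≤ 2 * ∑ e ∈ F, Sym2.lift ⟨w, hw⟩ e := by nlinarith [hpos r u hGadj]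
      · -- split into component of r and the rest
        set P : Sym2 V → Prop := fun e' => ∃ a ∈ e', (fromEdgeSet (↑F' : Set (Sym2 V))).Reachable r a with hP
        set F₁ := F'.filter P with hF₁
        set F₂ := F'.filter (fun e' => ¬ P e') with hF₂
        have hc1 : F₁.card ≤ n := le_trans (Finset.card_le_card (Finset.filter_subset _ _)) hcard'
        have hc2 : F₂.card ≤ n := le_trans (Finset.card_le_card (Finset.filter_subset _ _)) hcard'
        have hs1 : (↑F₁ : Set (Sym2 V)) ⊆ G.edgeSet := fun e he =>
          hsub' (by exact_mod_cast Finset.filter_subset _ _ (by exact_mod_cast he))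
        have hs2 : (↑F₂ : Set (Sym2 V)) ⊆ G.edgeSet := fun e he =>
          hsub' (by exact_mod_cast Finset.filter_subset _ _ (by exact_mod_cast he))
        obtain ⟨p₁, hp₁, hw₁⟩ := ih F₁ hc1 hs1 r
        obtain ⟨p₂, hp₂, hw₂⟩ := ih F₂ hc2 hs2 u
        -- transfers of reachability
        have htrans1 : ∀ x, (fromEdgeSet (↑F' : Set (Sym2 V))).Reachable r x →
            (fromEdgeSet (↑F₁ : Set (Sym2 V))).Reachable r x := by
          intro x hx
          obtain ⟨q⟩ := hx
          refine ⟨q.transfer _ ?_⟩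
          intro e' he'
          have he'F' : e' ∈ (fromEdgeSet (↑F' : Set (Sym2 V))).edgeSet := q.edges_subset_edgeSet he'
          rw [edgeSet_fromEdgeSet] at he'F' ⊢
          refine ⟨?_, he'F'.2⟩
          induction e' with
          | _ a b =>
            have ha : a ∈ q.support := Walk.fst_mem_support_of_mem_edges q he'
            refine Finset.mem_coe.mpr (Finset.mem_filter.mpr ⟨Finset.mem_coe.mp he'F'.1, ?_⟩)
            exact ⟨a, Sym2.mem_mk_left a b, reach_of_mem_support q ha⟩
        have htrans2 : ∀ x, (fromEdgeSet (↑F' : Set (Sym2 V))).Reachable u x →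
            (fromEdgeSet (↑F₂ : Set (Sym2 V))).Reachable u x := by
          intro x hx
          obtain ⟨q⟩ := hx
          refine ⟨q.transfer _ ?_⟩
          intro e' he'
          have he'F' : e' ∈ (fromEdgeSet (↑F' : Set (Sym2 V))).edgeSet := q.edges_subset_edgeSet he'
          rw [edgeSet_fromEdgeSet] at he'F' ⊢
          refine ⟨?_, he'F'.2⟩
          induction e' with
          | _ a b =>
            have ha : a ∈ q.support := Walk.fst_mem_support_of_mem_edges q he'
            have hb : b ∈ q.support := Walk.snd_mem_support_of_mem_edges q he'
            refine Finset.mem_coe.mpr (Finset.mem_filter.mpr ⟨Finset.mem_coe.mp he'F'.1, ?_⟩)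
            rintro ⟨c, hc, hrc⟩
            rcases Sym2.mem_iff.mp hc with h1 | h1
            · subst h1
              exact hru (hrc.trans (reach_of_mem_support q ha).symm)
            · subst h1
              exact hru (hrc.trans (reach_of_mem_support q hb).symm)
        refine ⟨p₁.append (Walk.cons hGadj (p₂.append (Walk.cons hGadj.symm Walk.nil))), ?_, ?_⟩
        · intro x hx
          obtain ⟨q⟩ := hx
          rw [Walk.mem_support_append_iff]
          rcases reach_erase heF (Or.inl (Reachable.refl r)) q with h1 | h1
          · exact Or.inl (hp₁ x (htrans1 x h1))
          · right
            rw [Walk.support_cons, List.mem_cons, Walk.mem_support_append_iff]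
            exact Or.inr (Or.inl (hp₂ x (htrans2 x h1)))
        · have hsplit : ∑ e ∈ F₁, Sym2.lift ⟨w, hw⟩ e + ∑ e ∈ F₂, Sym2.lift ⟨w, hw⟩ e
              = ∑ e ∈ F', Sym2.lift ⟨w, hw⟩ e :=
            Finset.sum_filter_add_sum_filter_not F' P _
          have hwur : w u r = w r u := hw u r
          rw [walkWeight_append, walkWeight_cons, walkWeight_append, walkWeight_cons]
          have hnil : walkWeight w (Walk.nil : G.Walk r r) = 0 := by simp [walkWeight]
          rw [hnil]
          linarith [hw₁, hw₂]
    · -- no edge at r: reachable set is {r}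
      refine ⟨Walk.nil, ?_, ?_⟩
      · intro x hx
        obtain ⟨q⟩ := hx
        cases q with
        | nil => simp
        | cons h q =>
          rw [fromEdgeSet_adj] at h
          exact absurd ⟨_, h.1, Sym2.mem_mk_left _ _⟩ hex
      · have : (0:ℝ) ≤ ∑ e ∈ F, Sym2.lift ⟨w, hw⟩ e :=
          Finset.sum_nonneg fun e he => le_of_lt (lift_pos hw hpos e (hsub he))
        simp only [walkWeight, Walk.darts_nil, List.map_nil, List.sum_nil]
        linarith

theorem stmt9 {V C : Type*} [Fintype V] [Nonempty V] {G : SimpleGraph V}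
    (w : V → V → ℝ) (hw : ∀ a b, w a b = w b a)
    (hpos : ∀ a b, G.Adj a b → 0 < w a b) (κ : V → C)
    (htwo : ∃ u v : V, κ u ≠ κ v)
    (optT : ℝ)
    (hT : IsLeast {x : ℝ | ∃ H : G.Subgraph, H.Connected ∧ H.coe.IsAcyclic ∧
        (∀ c ∈ Set.range κ, ∃ v ∈ H.verts, κ v = c) ∧
        x = ∑ e ∈ H.edgeSet.toFinite.toFinset, Sym2.lift ⟨w, hw⟩ e} optT)
    (optA : V → ℝ)
    (hA : ∀ j : V, IsLeast {x : ℝ | ∃ (t : V) (p : G.Walk j t),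
        (∀ c ∈ Set.range κ, ∃ v ∈ p.support, κ v = c) ∧
        x = walkWeight w p} (optA j)) :
    Finset.univ.inf' Finset.univ_nonempty optA < 2 * optT := by
  classical
  obtain ⟨H, hconn, hacyc, hcol, hopt⟩ := hT.1
  set F := H.edgeSet.toFinite.toFinset with hF
  have hsubF : (↑F : Set (Sym2 V)) ⊆ G.edgeSet := by
    intro e he
    rw [hF, Set.Finite.coe_toFinset] at he
    exact H.edgeSet_subset he
  obtain ⟨u₀, v₀, hne⟩ := htwo
  obtain ⟨r, hr, hrκ⟩ := hcol (κ u₀) ⟨u₀, rfl⟩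
  obtain ⟨r', hr', hr'κ⟩ := hcol (κ v₀) ⟨v₀, rfl⟩
  have hrr' : r' ≠ r := fun h => hne (by rw [← hrκ, ← hr'κ, h])
  -- every vertex of H is reachable from r in fromEdgeSet F
  have hreach : ∀ x ∈ H.verts, (fromEdgeSet (↑F : Set (Sym2 V))).Reachable r x := by
    intro x hx
    have hc : H.coe.Reachable ⟨r, hr⟩ ⟨x, hx⟩ := hconn.preconnected _ _
    let f : H.coe →g fromEdgeSet (↑F : Set (Sym2 V)) :=
      ⟨Subtype.val, fun {a b} hab => by
        rw [Subgraph.coe_adj] at hab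
        rw [fromEdgeSet_adj]
        refine ⟨?_, (H.adj_sub hab).ne⟩
        simp only [hF, Finset.mem_coe, Set.Finite.mem_toFinset, Subgraph.mem_edgeSet]
        exact hab⟩
    exact hc.map f
  obtain ⟨p, hp, hwp⟩ := tour w hw hpos F.card F le_rfl hsubF r
  have hr'p : r' ∈ p.support := hp r' (hreach r' hr')
  cases p with
  | nil => simp at hr'p; exact absurd hr'p hrr'
  | cons h q =>
    rename_i y
    have hcolq : ∀ c ∈ Set.range κ, ∃ v ∈ q.support, κ v = c := by
      intro c hc
      obtain ⟨v, hv, hvκ⟩ := hcol c hc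
      have : v ∈ (Walk.cons h q).support := hp v (hreach v hv)
      rw [Walk.support_cons, List.mem_cons] at this
      rcases this with h1 | h1
      · exact ⟨r, Walk.end_mem_support q, h1 ▸ hvκ⟩
      · exact ⟨v, h1, hvκ⟩
    have hle : optA y ≤ walkWeight w q := (hA y).2 ⟨r, q, hcolq, rfl⟩
    have hwcons := walkWeight_cons w h q
    have hy : 0 < w r y := hpos r y h
    have hinf : Finset.univ.inf' Finset.univ_nonempty optA ≤ optA y :=
      Finset.inf'_le _ (Finset.mem_univ y)
    rw [← hopt] at hwp
    linarith [hwp, hwcons]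
end

section
/- Let G be an undirected graph with positive edge weights and a vertex coloring, with at least two colors. With OPT_T and OPT_ACSP(j) as defined, and a constant c ≥ 1, if A : V → ℝ is any function satisfying OPT_ACSP(j) ≤ A(j) ≤ c · OPT_ACSP(j) for every vertex j, then OPT_T ≤ min over j of A(j) < 2·c · OPT_T. -/
/-!
A colourful walk spans a connected subgraph, and a spanning tree of that subgraph is a
colourful tree no heavier than the walk; hence `OPT_T ≤ OPT_ACSP(j) ≤ A(j)`. Conversely, a
depth-first tour of an optimal tree is a closed walk traversing every tree edge exactly twice.
With two colours the tree has an edge, so deleting the first (positive) edge of the tour leaves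
a colourful walk of weight `< 2 · OPT_T`, and `min A ≤ c · OPT_ACSP < 2c · OPT_T`.
-/

open SimpleGraph

theorem List.sum_toFinset_le_sum_map {α : Type*} [DecidableEq α] {l : List α} {f : α → ℝ}
    (hf : ∀ a ∈ l, 0 ≤ f a) : ∑ a ∈ l.toFinset, f a ≤ (l.map f).sum := by
  rw [Finset.sum_list_map_count]
  refine Finset.sum_le_sum fun a ha => ?_
  have ha' := List.mem_toFinset.mp ha
  rw [nsmul_eq_mul]
  exact le_mul_of_one_le_left (hf a ha') (by exact_mod_cast List.count_pos_iff.mpr ha')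

namespace SimpleGraph

variable {V : Type*} {G : SimpleGraph V}

theorem walkWeight_eq_sum_map_edges (w : V → V → ℝ) (hw : ∀ a b, w a b = w b a) {u v : V}
    (p : G.Walk u v) : walkWeight w p = (p.edges.map (Sym2.lift ⟨w, hw⟩)).sum := by
  induction p with
  | nil => rfl
  | cons h p ih => simpa [walkWeight] using ih

theorem Walk.toFinset_edgeSet_toSubgraph [Finite V] [DecidableEq V] {u v : V}
    (p : G.Walk u v) :
    p.toSubgraph.edgeSet.toFinite.toFinset = p.edges.toFinset := by
  ext e
  simp

namespace Subgraph

theorem Connected.exists_isTree_le {H : G.Subgraph} (hH : H.Connected) :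
    ∃ T ≤ H, T.verts = H.verts ∧ T.Connected ∧ T.coe.IsAcyclic := by
  obtain ⟨T, hTH, hT⟩ := hH.coe.exists_isTree_le
  set T' := Subgraph.coeSubgraph (SimpleGraph.toSubgraph T hTH)
  have hverts : T'.verts = H.verts := by simp [T']
  let toT : T'.coe →g T :=
    ⟨fun v => ⟨v, hverts ▸ v.2⟩, fun {v x} hvx => by
      obtain ⟨_, _, hvx⟩ := (coeSubgraph_adj (SimpleGraph.toSubgraph T hTH) v x).mp hvx
      exact hvx⟩
  refine ⟨T', coeSubgraph_le _, hverts, (hT.connected.toSubgraph hTH).coeSubgraph,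
    hT.isAcyclic.comap toT fun v x hvx => ?_⟩
  simpa [toT, Subtype.ext_iff] using hvx

end Subgraph

theorem Walk.exists_tree_weight_le [Finite V] (f : Sym2 V → ℝ)
    (hf : ∀ e ∈ G.edgeSet, 0 ≤ f e) {u v : V} (p : G.Walk u v) :
    ∃ T : G.Subgraph, T.Connected ∧ T.coe.IsAcyclic ∧ T.verts = {x | x ∈ p.support} ∧
      ∑ e ∈ T.edgeSet.toFinite.toFinset, f e ≤ (p.edges.map f).sum := by
  classical
  obtain ⟨T, hTp, hverts, hconn, hacyc⟩ := p.toSubgraph_connected.exists_isTree_le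
  refine ⟨T, hconn, hacyc, hverts.trans p.verts_toSubgraph, ?_⟩
  have hsub : T.edgeSet.toFinite.toFinset ⊆ p.edges.toFinset := by
    rw [← p.toFinset_edgeSet_toSubgraph]
    exact Set.Finite.toFinset_subset_toFinset.mpr (Subgraph.edgeSet_mono hTp)
  have hpf : ∀ e ∈ p.edges, 0 ≤ f e := fun e he => hf e (p.edges_subset_edgeSet he)
  calc ∑ e ∈ T.edgeSet.toFinite.toFinset, f e
      ≤ ∑ e ∈ p.edges.toFinset, f e :=
        Finset.sum_le_sum_of_subset_of_nonneg hsub fun e he _ => hpf e (List.mem_toFinset.mp he)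
    _ ≤ (p.edges.map f).sum := List.sum_toFinset_le_sum_map hpf

theorem Walk.edges_append_cons_cons_perm {u a b v : V} (q : G.Walk u a) (h : G.Adj a b)
    (r : G.Walk a v) :
    (q.append (cons h (cons h.symm r))).edges.Perm (s(a, b) :: s(a, b) :: (q.append r).edges) := by
  simp only [edges_append, edges_cons, Sym2.eq_swap (a := b)]
  exact List.perm_middle.trans (List.perm_middle.cons _)

section Tour

variable [DecidableEq V]

/-- Weight form of "`p` runs in `H` and traverses each of its edges exactly twice", the
invariant of a depth-first tour. -/
def Walk.IsDoubledIn (H : G.Subgraph) (f : Sym2 V → ℝ) {u v : V} (p : G.Walk u v) : Prop :=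
  (∀ e ∈ p.edges, e ∈ H.edgeSet) ∧ (p.edges.map f).sum = 2 * ∑ e ∈ p.edges.toFinset, f e

/-- Splice the detour `a → b → a` into `p` at `a`: the new edge `s(a, b)` is used twice. -/
theorem Walk.IsDoubledIn.exists_detour {H : G.Subgraph} {f : Sym2 V → ℝ} {u a b : V}
    {p : G.Walk u u} (hp : p.IsDoubledIn H f) (ha : a ∈ p.support) (hab : H.Adj a b)
    (hb : b ∉ p.support) :
    ∃ p' : G.Walk u u, p'.IsDoubledIn H f ∧
      insert b {x | x ∈ p.support} ⊆ {x | x ∈ p'.support} := by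
  set q := p.takeUntil a ha
  set r := p.dropUntil a ha
  have hqr : q.append r = p := p.take_spec ha
  have hperm := q.edges_append_cons_cons_perm hab.adj_sub r
  rw [hqr] at hperm
  have hnew : s(a, b) ∉ p.edges := fun h => hb (p.snd_mem_support_of_mem_edges h)
  refine ⟨q.append (cons hab.adj_sub (cons hab.adj_sub.symm r)), ⟨fun e he => ?_, ?_⟩, ?_⟩
  · rcases List.mem_cons.mp (hperm.mem_iff.mp he) with rfl | he
    · exact hab
    rcases List.mem_cons.mp he with rfl | he
    · exact hab
    · exact hp.1 e he
  · rw [(hperm.map f).sum_eq, List.toFinset_eq_of_perm _ _ hperm]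
    simp only [List.map_cons, List.sum_cons, hp.2, List.toFinset_cons, Finset.mem_insert,
      List.mem_toFinset, hnew, or_false, Finset.insert_eq_of_mem, not_false_eq_true,
      Finset.sum_insert]
    ring
  · rw [← hqr]
    intro x hx
    simp only [Set.mem_insert_iff, Set.mem_ofPred_eq, mem_support_append_iff, support_cons,
      List.mem_cons] at hx ⊢
    tauto

theorem Subgraph.Connected.exists_isDoubledIn_covering [Finite V] {H : G.Subgraph}
    (hH : H.Connected) (f : Sym2 V → ℝ) {u : V} (hu : u ∈ H.verts) :
    ∃ p : G.Walk u u, p.IsDoubledIn H f ∧ H.verts ⊆ {x | x ∈ p.support} := by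
  suffices ∀ p : G.Walk u u, p.IsDoubledIn H f →
      ∃ p' : G.Walk u u, p'.IsDoubledIn H f ∧ H.verts ⊆ {x | x ∈ p'.support} from
    this Walk.nil ⟨by simp, by simp⟩
  intro p hp
  induction hn : (H.verts \ {x | x ∈ p.support}).ncard using Nat.strong_induction_on
    generalizing p with
  | _ n ih =>
  by_cases hcov : H.verts ⊆ {x | x ∈ p.support}
  · exact ⟨p, hp, hcov⟩
  obtain ⟨x, hx, hxp⟩ := Set.not_subset.mp hcov
  obtain ⟨q⟩ := hH.coe.preconnected ⟨u, hu⟩ ⟨x, hx⟩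
  obtain ⟨d, -, ha, hb⟩ :=
    q.exists_boundary_dart {v | ↑v ∈ p.support} (by simp) (by simpa using hxp)
  obtain ⟨p', hp', hsupp⟩ := hp.exists_detour ha d.adj hb
  refine ih _ ?_ p' hp' rfl
  rw [← hn]
  have hsub := Set.sdiff_subset_sdiff_right (s := H.verts) ((Set.subset_insert _ _).trans hsupp)
  exact Set.ncard_lt_ncard <|
    hsub.ssubset_of_mem_notMem ⟨d.snd.2, hb⟩ fun h => h.2 (hsupp (Set.mem_insert _ _))

end Tour

theorem Subgraph.Connected.exists_closed_walk_weight_le [Finite V] {H : G.Subgraph}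
    (hH : H.Connected) (f : Sym2 V → ℝ) (hf : ∀ e ∈ H.edgeSet, 0 ≤ f e) {u : V}
    (hu : u ∈ H.verts) :
    ∃ p : G.Walk u u, H.verts ⊆ {x | x ∈ p.support} ∧
      (p.edges.map f).sum ≤ 2 * ∑ e ∈ H.edgeSet.toFinite.toFinset, f e := by
  classical
  obtain ⟨p, ⟨hpH, hpf⟩, hcov⟩ := hH.exists_isDoubledIn_covering f hu
  refine ⟨p, hcov, hpf ▸ mul_le_mul_of_nonneg_left ?_ zero_le_two⟩
  refine Finset.sum_le_sum_of_subset_of_nonneg (fun e he => ?_) fun e he _ => ?_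
  · simpa using hpH e (List.mem_toFinset.mp he)
  · exact hf e (by simpa using he)

theorem Subgraph.Connected.exists_walk_weight_lt [Finite V] {H : G.Subgraph}
    (hH : H.Connected) (f : Sym2 V → ℝ) (hf : ∀ e ∈ G.edgeSet, 0 < f e) {x y : V}
    (hx : x ∈ H.verts) (hy : y ∈ H.verts) (hxy : x ≠ y) :
    ∃ (z : V) (q : G.Walk z x), H.verts ⊆ {v | v ∈ q.support} ∧
      (q.edges.map f).sum < 2 * ∑ e ∈ H.edgeSet.toFinite.toFinset, f e := by
  obtain ⟨p, hcov, hp⟩ :=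
    hH.exists_closed_walk_weight_le f (fun e he => (hf e (H.edgeSet_subset he)).le) hx
  cases p with
  | nil => exact absurd (by simpa using hcov hy) hxy.symm
  | @cons _ z _ hxz q =>
    refine ⟨z, q, fun v hv => ?_, ?_⟩
    · rcases List.mem_cons.mp (hcov hv) with rfl | hvq
      exacts [q.end_mem_support, hvq]
    · simp only [Walk.edges_cons, List.map_cons, List.sum_cons] at hp
      linarith [hf s(x, z) hxz]

end SimpleGraph

theorem stmt10 {V C : Type*} [Fintype V] [Nonempty V] {G : SimpleGraph V}
    (w : V → V → ℝ) (hw : ∀ a b, w a b = w b a)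
    (hpos : ∀ a b, G.Adj a b → 0 < w a b) (κ : V → C)
    (htwo : ∃ u v : V, κ u ≠ κ v)
    (optT : ℝ)
    (hT : IsLeast {x : ℝ | ∃ H : G.Subgraph, H.Connected ∧ H.coe.IsAcyclic ∧
        (∀ c ∈ Set.range κ, ∃ v ∈ H.verts, κ v = c) ∧
        x = ∑ e ∈ H.edgeSet.toFinite.toFinset, Sym2.lift ⟨w, hw⟩ e} optT)
    (optA : V → ℝ)
    (hA : ∀ j : V, IsLeast {x : ℝ | ∃ (t : V) (p : G.Walk j t),
        (∀ c ∈ Set.range κ, ∃ v ∈ p.support, κ v = c) ∧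
        x = walkWeight w p} (optA j))
    (c : ℝ) (hc : 1 ≤ c) (A : V → ℝ)
    (hAbounds : ∀ j : V, optA j ≤ A j ∧ A j ≤ c * optA j) :
    optT ≤ Finset.univ.inf' Finset.univ_nonempty A ∧
      Finset.univ.inf' Finset.univ_nonempty A < 2 * c * optT := by
  set f := Sym2.lift ⟨w, hw⟩
  have hf : ∀ e ∈ G.edgeSet, 0 < f e := fun e he => by
    induction e using Sym2.ind with
    | _ a b => exact hpos a b he
  have hlower (j : V) : optT ≤ optA j := by
    obtain ⟨t, p, hcol, hp⟩ := (hA j).1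
    obtain ⟨T, hconn, hacyc, hverts, hTp⟩ := p.exists_tree_weight_le f fun e he => (hf e he).le
    rw [hp, walkWeight_eq_sum_map_edges w hw]
    refine (hT.2 ⟨T, hconn, hacyc, fun k hk => ?_, rfl⟩).trans hTp
    simpa [hverts] using hcol k hk
  refine ⟨Finset.le_inf' _ _ fun j _ => (hlower j).trans (hAbounds j).1, ?_⟩
  obtain ⟨H, hconn, -, hcol, rfl⟩ := hT.1
  obtain ⟨u₀, v₀, hne⟩ := htwo
  obtain ⟨x, hx, hxc⟩ := hcol _ ⟨u₀, rfl⟩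
  obtain ⟨y, hy, hyc⟩ := hcol _ ⟨v₀, rfl⟩
  obtain ⟨z, q, hcov, hq⟩ :=
    hconn.exists_walk_weight_lt f hf hx hy fun h => hne (by rw [← hxc, ← hyc, h])
  have hz : optA z ≤ walkWeight w q :=
    (hA z).2 ⟨x, q, fun k hk => (hcol k hk).imp fun v hv => ⟨hcov hv.1, hv.2⟩, rfl⟩
  calc Finset.univ.inf' Finset.univ_nonempty A ≤ A z := Finset.inf'_le _ (Finset.mem_univ z)
    _ ≤ c * optA z := (hAbounds z).2
    _ ≤ c * walkWeight w q := by gcongr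
    _ < c * (2 * _) := by gcongr; rwa [walkWeight_eq_sum_map_edges w hw]
    _ = _ := by ring
end

section
/- Let p be a walk in an undirected graph G visiting a set S of vertices, and suppose p traverses some edge {i,j} in the direction from i to j more than once. Then there exists a walk p' in G with the same endpoints, visiting the same set S of vertices, whose multiset of traversed edges is the multiset of edges of p with two copies of {i,j} removed. -/
open SimpleGraph

/-!
Cut `p` at its first two traversals of `i → j`, so that `p = x ++ (i → j) ++ y ++ (i → j) ++ z`
with `y : j ⟶ i`. Then `x ++ yᴿ ++ z` is a walk from `u` to `v`; it drops exactly the two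
traversals of `{i, j}`, and it still visits `i` and `j` because they are the endpoints of `y`.
-/

namespace SimpleGraph.Walk

variable {V : Type*} {G : SimpleGraph V}

theorem exists_eq_append_cons_of_lt_countP [DecidableEq V] {a b : V} (p : G.Walk a b)
    (i j : V) {n : ℕ} (h : n < p.darts.countP (fun d => decide (d.fst = i ∧ d.snd = j))) :
    ∃ (hij : G.Adj i j) (x : G.Walk a i) (z : G.Walk j b),
      p = x.append (cons hij z) ∧
      n ≤ z.darts.countP (fun d => decide (d.fst = i ∧ d.snd = j)) := by
  induction p with
  | nil => simp at h
  | @cons a c b hac q ih =>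
    by_cases hfirst : a = i ∧ c = j
    · obtain ⟨rfl, rfl⟩ := hfirst
      rw [darts_cons, List.countP_cons_of_pos (by simp)] at h
      exact ⟨hac, nil, q, by simp, Nat.le_of_lt_succ h⟩
    · rw [darts_cons, List.countP_cons_of_neg (by simpa using hfirst)] at h
      obtain ⟨hij, x, z, rfl, hz⟩ := ih h
      exact ⟨hij, cons hac x, z, by simp, hz⟩

variable {a b i j : V} (hij : G.Adj i j) (x : G.Walk a i) (y : G.Walk j i) (z : G.Walk j b)

theorem support_append_reverse_append :
    {w | w ∈ (x.append (y.reverse.append z)).support} =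
      {w | w ∈ (x.append (cons hij (y.append (cons hij z)))).support} := by
  have hi : i ∈ y.support := y.end_mem_support
  have hj : j ∈ y.support := y.start_mem_support
  ext w
  simp only [Set.mem_ofPred_eq, mem_support_append_iff, support_reverse, List.mem_reverse,
    support_cons, List.mem_cons]
  constructor
  · rintro (hw | hw | hw) <;> tauto
  · rintro (hw | rfl | hw | rfl | hw) <;> tauto

theorem edges_append_reverse_append :
    ((x.append (y.reverse.append z)).edges : Multiset (Sym2 V)) + {s(i, j), s(i, j)} =
      (x.append (cons hij (y.append (cons hij z)))).edges := by
  simp only [edges_append, edges_cons, edges_reverse, ← Multiset.coe_add, ← Multiset.cons_coe,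
    Multiset.coe_reverse, ← Multiset.singleton_add]
  abel

end SimpleGraph.Walk

theorem stmt16 {V : Type*} [DecidableEq V] {G : SimpleGraph V} {u v : V}
    (p : G.Walk u v) (i j : V)
    (h2 : 2 ≤ p.darts.countP (fun d => decide (d.fst = i ∧ d.snd = j))) :
    ∃ p' : G.Walk u v, {x | x ∈ p'.support} = {x | x ∈ p.support} ∧
      (p'.edges : Multiset (Sym2 V)) + {s(i, j), s(i, j)} =
        (p.edges : Multiset (Sym2 V)) := by
  obtain ⟨hij, x, z₁, rfl, h₁⟩ := p.exists_eq_append_cons_of_lt_countP i j (n := 1) h2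
  obtain ⟨-, y, z, rfl, -⟩ := z₁.exists_eq_append_cons_of_lt_countP i j (n := 0) h₁
  exact ⟨x.append (y.reverse.append z), Walk.support_append_reverse_append hij x y z,
    Walk.edges_append_reverse_append hij x y z⟩
end
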